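/- arXiv:2411.13912 — 6 statements merged into one kernel-verified Lean document; each statement's English description precedes it below -/
import Mathlib

section
/- Let n ≥ 4, N = (n-1)(n+2)/2, and let t > 0. Consider F(x) = -(3 - (N-2)/(N-1))·t·Σⱼ xⱼ² + Σⱼ xⱼ³ on the simplex {x ∈ ℝᴺ : xⱼ ≥ 0, Σⱼ xⱼ = Nt}. Then the minimum of F over this simplex is attained at a point of the form (0,...,0, Nt/k, ..., Nt/k) (with N−k zeros and k equal positive entries) for some 1 ≤ k ≤ N. -/
open Finset

private lemma schur3 (x y z : ℝ) (hx : 0 ≤ x) (hy : 0 ≤ y) (hz : 0 ≤ z) :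
    0 ≤ x*(x-y)*(x-z) + y*(y-x)*(y-z) + z*(z-x)*(z-y) := by
  rcases le_total x y with h1|h1 <;> rcases le_total y z with h2|h2 <;>
    rcases le_total x z with h3|h3 <;>
  nlinarith [mul_nonneg hx hy, mul_nonneg hy hz, mul_nonneg hx hz,
    sq_nonneg (x-y), sq_nonneg (y-z), sq_nonneg (x-z)]

private noncomputable def ee (a b c : ℝ) : ℝ :=
  a*(a-b)*(a-c) + b*(b-a)*(b-c) + c*(c-a)*(c-b)

private lemma ee_nonneg (a b c : ℝ) (ha : 0 ≤ a) (hb : 0 ≤ b) (hc : 0 ≤ c) :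
    0 ≤ ee a b c := schur3 a b c ha hb hc

private lemma ee_expand (a b c : ℝ) : ee a b c =
    a^3 + b^3 + c^3 + 3*(a*b*c) - (a^2*b + a^2*c + b^2*a + b^2*c + c^2*a + c^2*b) := by
  unfold ee; ring

private lemma ee_jj (a b : ℝ) : ee a b b = a^3 + a*b^2 - 2*(a^2*b) := by unfold ee; ring
private lemma ee_ji (a b : ℝ) : ee a b a = b^3 + b*a^2 - 2*(b^2*a) := by unfold ee; ring
private lemma ee_ii (a c : ℝ) : ee a a c = c^3 + c*a^2 - 2*(c^2*a) := by unfold ee; ring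
private lemma ee_iii (a : ℝ) : ee a a a = 0 := by unfold ee; ring

private lemma key (N : ℕ) (x : Fin N → ℝ) (hx : ∀ j, 0 ≤ x j) :
    0 ≤ (N:ℝ)*((N:ℝ)-1)*(∑ j, (x j)^3) - (2*(N:ℝ)-1)*(∑ j, x j)*(∑ j, (x j)^2)
        + (∑ j, x j)^3 := by
  have hS3nonneg : 0 ≤ ∑ i, ∑ j ∈ univ.erase i, ∑ k ∈ (univ.erase i).erase j,
      ee (x i) (x j) (x k) :=
    Finset.sum_nonneg fun i _ => Finset.sum_nonneg fun j _ =>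
      Finset.sum_nonneg fun k _ => ee_nonneg _ _ _ (hx i) (hx j) (hx k)
  have hA : ∑ i, ∑ j, ∑ k, ee (x i) (x j) (x k) =
      3*((N:ℝ)^2*(∑ j, (x j)^3) - 2*(N:ℝ)*(∑ j, x j)*(∑ j, (x j)^2) + (∑ j, x j)^3) := by
    simp only [ee_expand, Finset.sum_add_distrib, Finset.sum_sub_distrib,
      ← Finset.sum_mul, ← Finset.mul_sum, Finset.sum_const, Finset.card_univ,
      Fintype.card_fin, nsmul_eq_mul]
    ring
  have hB : ∑ i, ∑ j, ee (x i) (x j) (x j) =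
      (N:ℝ)*(∑ j, (x j)^3) - (∑ j, x j)*(∑ j, (x j)^2) := by
    simp only [ee_jj, Finset.sum_add_distrib, Finset.sum_sub_distrib,
      ← Finset.sum_mul, ← Finset.mul_sum, Finset.sum_const, Finset.card_univ,
      Fintype.card_fin, nsmul_eq_mul]
    ring
  have hC : ∑ i, ∑ j, ee (x i) (x j) (x i) =
      (N:ℝ)*(∑ j, (x j)^3) - (∑ j, x j)*(∑ j, (x j)^2) := by
    simp only [ee_ji, Finset.sum_add_distrib, Finset.sum_sub_distrib,
      ← Finset.sum_mul, ← Finset.mul_sum, Finset.sum_const, Finset.card_univ,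
      Fintype.card_fin, nsmul_eq_mul]
    ring
  have hD : ∑ i, ∑ k, ee (x i) (x i) (x k) =
      (N:ℝ)*(∑ j, (x j)^3) - (∑ j, x j)*(∑ j, (x j)^2) := by
    simp only [ee_ii, Finset.sum_add_distrib, Finset.sum_sub_distrib,
      ← Finset.sum_mul, ← Finset.mul_sum, Finset.sum_const, Finset.card_univ,
      Fintype.card_fin, nsmul_eq_mul]
    ring
  -- now identify the distinct-sum with full sums
  have hstep : ∑ i, ∑ j ∈ univ.erase i, ∑ k ∈ (univ.erase i).erase j,
      ee (x i) (x j) (x k)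
      = (∑ i, ∑ j, ∑ k, ee (x i) (x j) (x k))
        - (∑ i, ∑ j, ee (x i) (x j) (x j))
        - (∑ i, ∑ j, ee (x i) (x j) (x i))
        - (∑ i, ∑ k, ee (x i) (x i) (x k))
        + 2 * ∑ i, ee (x i) (x i) (x i) := by
    have inner : ∀ (i : Fin N), ∀ j ∈ univ.erase i,
        ∑ k ∈ (univ.erase i).erase j, ee (x i) (x j) (x k)
          = (∑ k, ee (x i) (x j) (x k)) - ee (x i) (x j) (x i) - ee (x i) (x j) (x j) := by
      intro i j hj
      have hji : j ≠ i := Finset.ne_of_mem_erase hj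
      rw [Finset.sum_erase_eq_sub (Finset.mem_erase.mpr ⟨hji, Finset.mem_univ j⟩),
        Finset.sum_erase_eq_sub (Finset.mem_univ i)]
    calc ∑ i, ∑ j ∈ univ.erase i, ∑ k ∈ (univ.erase i).erase j, ee (x i) (x j) (x k)
        = ∑ i, ∑ j ∈ univ.erase i,
            ((∑ k, ee (x i) (x j) (x k)) - ee (x i) (x j) (x i) - ee (x i) (x j) (x j)) := by
          exact Finset.sum_congr rfl fun i _ => Finset.sum_congr rfl (inner i)
      _ = ∑ i, ((∑ j, ((∑ k, ee (x i) (x j) (x k)) - ee (x i) (x j) (x i) - ee (x i) (x j) (x j)))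
            - ((∑ k, ee (x i) (x i) (x k)) - ee (x i) (x i) (x i) - ee (x i) (x i) (x i))) := by
          exact Finset.sum_congr rfl fun i _ =>
            Finset.sum_erase_eq_sub (Finset.mem_univ i)
      _ = _ := by
          simp only [Finset.sum_sub_distrib, ee_iii]
          ring
  rw [hstep, hA, hB, hC, hD] at hS3nonneg
  simp only [ee_iii, Finset.sum_const_zero] at hS3nonneg
  nlinarith [hS3nonneg]


/-- Let `n ≥ 4`, `N = (n-1)(n+2)/2`, `t > 0`. The minimum of
`F(x) = -(3 - (N-2)/(N-1))·t·Σ xⱼ² + Σ xⱼ³` over the simplex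
`{x : xⱼ ≥ 0, Σ xⱼ = Nt}` is attained at a point of the form
`(0,…,0, Nt/k, …, Nt/k)` (with `N − k` zeros and `k` equal positive entries)
for some `1 ≤ k ≤ N`. -/
theorem min_of_F_on_simplex (n : ℕ) (hn : 4 ≤ n) (t : ℝ) (ht : 0 < t) :
    ∃ k : ℕ, 1 ≤ k ∧ k ≤ (n-1)*(n+2)/2 ∧
      ∀ x : Fin ((n-1)*(n+2)/2) → ℝ,
        (∀ j, 0 ≤ x j) → (∑ j, x j = (((n-1)*(n+2)/2 : ℕ) : ℝ) * t) →
        (-(3 - ((((n-1)*(n+2)/2 : ℕ) : ℝ) - 2)/((((n-1)*(n+2)/2 : ℕ) : ℝ) - 1)) * t *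
            (∑ j : Fin ((n-1)*(n+2)/2), (if (j : ℕ) < (n-1)*(n+2)/2 - k then (0:ℝ) else
              (((n-1)*(n+2)/2 : ℕ) : ℝ) * t / k)^2) +
          ∑ j : Fin ((n-1)*(n+2)/2), (if (j : ℕ) < (n-1)*(n+2)/2 - k then (0:ℝ) else
              (((n-1)*(n+2)/2 : ℕ) : ℝ) * t / k)^3)
        ≤ -(3 - ((((n-1)*(n+2)/2 : ℕ) : ℝ) - 2)/((((n-1)*(n+2)/2 : ℕ) : ℝ) - 1)) * t *
            (∑ j, (x j)^2) + ∑ j, (x j)^3 := by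
  have h18 : 18 ≤ (n-1)*(n+2) := by
    have := Nat.mul_le_mul (show 3 ≤ n-1 by omega) (show 6 ≤ n+2 by omega)
    omega
  have hN9 : 9 ≤ (n-1)*(n+2)/2 := by omega
  set N : ℕ := (n-1)*(n+2)/2 with hNdef
  refine ⟨N, by omega, le_refl _, ?_⟩
  intro x hxnn hsum
  have hNR : (9:ℝ) ≤ (N:ℝ) := by exact_mod_cast hN9
  have hN0 : (N:ℝ) ≠ 0 := by linarith
  have hd : (0:ℝ) < (N:ℝ) - 1 := by linarith
  -- simplify candidate point
  simp only [Nat.sub_self, Nat.not_lt_zero, if_false, mul_div_cancel_left₀ t hN0,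
    Finset.sum_const, Finset.card_univ, Fintype.card_fin, nsmul_eq_mul]
  -- key inequality
  have hk := key N x hxnn
  rw [hsum] at hk
  have h1 : 0 ≤ ((N:ℝ)-1)*(∑ j, (x j)^3) - (2*(N:ℝ)-1)*t*(∑ j, (x j)^2)
      + (N:ℝ)^2*t^3 := by nlinarith [hk]
  rw [← sub_nonneg]
  have heq : -(3 - ((N:ℝ) - 2)/((N:ℝ) - 1)) * t * (∑ j, (x j)^2) + (∑ j, (x j)^3)
      - (-(3 - ((N:ℝ) - 2)/((N:ℝ) - 1)) * t * ((N:ℝ) * t^2) + (N:ℝ) * t^3)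
      = (((N:ℝ)-1)*(∑ j, (x j)^3) - (2*(N:ℝ)-1)*t*(∑ j, (x j)^2)
          + (N:ℝ)^2*t^3) / ((N:ℝ)-1) := by
    field_simp
    ring
  rw [heq]
  exact div_nonneg h1 hd.le
end

section
/- Let n ≥ 4, N = (n-1)(n+2)/2, and θ = θ(n) = 3(N-1)(N+1-n)/((N-1)(N-3)+3n(N-2)) - 1. For λ̄ > 0 and real numbers λ₁ ≤ λ₂ ≤ ... ≤ λ_N with λ₁ ≥ -θλ̄ and Σⱼ λⱼ = Nλ̄, the quantity f(λ) = [N(N-3)θ - (2N-9n+6)N]λ̄³ + [(2N-12n+6) - (N-3)θ]λ̄·Σⱼ λⱼ² + 3n·Σⱼ λⱼ³ is nonnegative. -/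
set_option maxHeartbeats 1000000 in
/-- Let `n ≥ 4`, `N = (n-1)(n+2)/2`, `θ = θ(n)`. For `λ̄ > 0` and reals
`λ₁ ≤ ⋯ ≤ λ_N` with `λ₁ ≥ -θλ̄` and `Σⱼ λⱼ = Nλ̄`, the quantity
`f(λ) = [N(N-3)θ-(2N-9n+6)N]λ̄³ + [(2N-12n+6)-(N-3)θ]λ̄·Σⱼλⱼ² + 3n·Σⱼλⱼ³`
is nonnegative. -/
theorem f_nonneg (n N : ℕ) (hn : 4 ≤ n) (hN : N = (n-1)*(n+2)/2)
    (θ : ℝ)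
    (hθ : θ = 3 * ((N:ℝ)-1) * ((N:ℝ)+1-n) /
        (((N:ℝ)-1) * ((N:ℝ)-3) + 3*n*((N:ℝ)-2)) - 1)
    (lam : Fin N → ℝ) (hmono : Monotone lam)
    (lb : ℝ) (hlb : 0 < lb) (hsum : ∑ j, lam j = (N:ℝ) * lb)
    (hlow : ∀ j, -θ * lb ≤ lam j) :
    0 ≤ ((N:ℝ)*((N:ℝ)-3)*θ - (2*(N:ℝ)-9*n+6)*(N:ℝ)) * lb^3
        + ((2*(N:ℝ)-12*n+6) - ((N:ℝ)-3)*θ) * lb * (∑ j, (lam j)^2)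
        + 3*n * (∑ j, (lam j)^3) := by
  -- numeric groundwork
  have hn4 : (4:ℝ) ≤ (n:ℝ) := by exact_mod_cast hn
  have hev : 2 ∣ (n-1)*(n+2) := by
    rcases Nat.even_or_odd n with h | h
    · rcases h with ⟨k, hk⟩
      exact Dvd.dvd.mul_left ⟨k+1, by omega⟩ _
    · rcases h with ⟨k, hk⟩
      exact Dvd.dvd.mul_right ⟨k, by omega⟩ _
  have hN2 : 2 * N = (n-1)*(n+2) := by rw [hN]; exact Nat.mul_div_cancel' hev
  have hNr : 2 * (N:ℝ) = ((n:ℝ)-1) * ((n:ℝ)+2) := by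
    have := congrArg (fun k : ℕ => (k:ℝ)) hN2
    push_cast [Nat.cast_sub (show 1 ≤ n by omega)] at this
    linarith [this]
  have hN9 : (9:ℝ) ≤ (N:ℝ) := by nlinarith
  have hNn : (n:ℝ) + 5 ≤ (N:ℝ) := by nlinarith
  have hNpos : 0 < N := by exact_mod_cast (show (0:ℝ) < (N:ℝ) by linarith)
  have hdpos : 0 < ((N:ℝ)-1) * ((N:ℝ)-3) + 3*n*((N:ℝ)-2) := by nlinarith
  have hdne : ((N:ℝ)-1) * ((N:ℝ)-3) + 3*n*((N:ℝ)-2) ≠ 0 := ne_of_gt hdpos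
  have hN1 : ((N:ℝ)-1) ≠ 0 := by intro h; nlinarith [h]
  have hN1pos : 0 < (N:ℝ)-1 := by linarith
  -- theta facts
  have hθd : θ * (((N:ℝ)-1) * ((N:ℝ)-3) + 3*n*((N:ℝ)-2))
      = 3*((N:ℝ)-1)*((N:ℝ)+1-(n:ℝ)) - (((N:ℝ)-1) * ((N:ℝ)-3) + 3*n*((N:ℝ)-2)) := by
    rw [hθ]; field_simp
  have hθ1 : -1 < θ := by
    have h1 : 0 < 3*((N:ℝ)-1)*((N:ℝ)+1-(n:ℝ)) := by nlinarith
    nlinarith [hθd]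
  -- abbreviations
  set c : ℝ := (1+θ) * lb with hc
  have hcpos : 0 < c := by rw [hc]; exact mul_pos (by linarith) hlb
  set τ : ℝ := c * ((N:ℝ)-2) / ((N:ℝ)-1) with hτ
  -- key coefficient identity: B·lb = 3n(τ - 3lb)
  have hB : ((2*(N:ℝ)-12*n+6) - ((N:ℝ)-3)*θ) * lb = 3*n*(τ - 3*lb) := by
    rw [hτ, hc]
    field_simp
    nlinarith [hθd, sq_nonneg lb]
  -- the main quantity as a sum of cubic terms
  have hexp : ∑ j, (lam j - lb)^2 * ((lam j - lb) + τ)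
      = (∑ j, (lam j)^3) + (τ - 3*lb) * (∑ j, (lam j)^2)
        + (3*lb^2 - 2*τ*lb) * (∑ j, lam j) + (N:ℝ)*(τ*lb^2 - lb^3) := by
    rw [Finset.mul_sum, Finset.mul_sum, ← Finset.sum_add_distrib, ← Finset.sum_add_distrib]
    rw [show (N:ℝ)*(τ*lb^2 - lb^3) = ∑ _j : Fin N, (τ*lb^2 - lb^3) by
      rw [Finset.sum_const, Finset.card_univ, Fintype.card_fin, nsmul_eq_mul]]
    rw [← Finset.sum_add_distrib]
    exact Finset.sum_congr rfl (fun j _ => by ring)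
  have hident : ((N:ℝ)*((N:ℝ)-3)*θ - (2*(N:ℝ)-9*n+6)*(N:ℝ)) * lb^3
        + ((2*(N:ℝ)-12*n+6) - ((N:ℝ)-3)*θ) * lb * (∑ j, (lam j)^2)
        + 3*n * (∑ j, (lam j)^3)
      = 3*n * ∑ j, (lam j - lb)^2 * ((lam j - lb) + τ) := by
    rw [hexp]
    linear_combination ((∑ j, (lam j)^2) - (N:ℝ)*lb^2) * hB
      - (3*(n:ℝ)*(3*lb^2 - 2*τ*lb)) * hsum
  rw [hident]
  -- now prove the sum is nonnegative
  set j0 : Fin N := ⟨0, hNpos⟩ with hj0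
  set s : ℝ := lb - lam j0 with hs
  have hsc : s ≤ c := by
    have := hlow j0
    rw [hs, hc]; nlinarith [this]
  set a : ℝ := s / ((N:ℝ)-1) with ha
  set b : ℝ := -τ - 2*a with hb
  set lc : ℝ := -(a^2 + 2*a*b) with hlc
  set dl : ℝ := a^2*b with hdl
  have hbs : b + s ≤ 0 := by
    have h1 : s*((N:ℝ)-3) ≤ c*((N:ℝ)-2) := by
      nlinarith [mul_nonneg (sub_nonneg.2 hsc) (show (0:ℝ) ≤ (N:ℝ)-3 by linarith)]
    have h2 : b + s = (s*((N:ℝ)-3) - c*((N:ℝ)-2))/((N:ℝ)-1) := by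
      rw [hb, hτ, ha]; field_simp; ring
    rw [h2]
    exact div_nonpos_of_nonpos_of_nonneg (by linarith) (by linarith)
  -- pointwise lower bound
  have hpoint : ∀ j : Fin N, lc * (lam j - lb) + dl ≤ (lam j - lb)^2 * ((lam j - lb) + τ) := by
    intro j
    have hj : lam j0 ≤ lam j := hmono (by exact Fin.mk_le_of_le_val (Nat.zero_le _))
    have hx : b ≤ lam j - lb := by rw [hs] at hbs; linarith
    have hfact : (lam j - lb)^2 * ((lam j - lb) + τ) - (lc * (lam j - lb) + dl)
        = ((lam j - lb) - a)^2 * ((lam j - lb) - b) := by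
      rw [hlc, hdl, hb]; ring
    nlinarith [mul_nonneg (sq_nonneg ((lam j - lb) - a)) (sub_nonneg.2 hx), hfact]
  -- sum over the erased set
  have hseraseadd : ∑ j ∈ Finset.univ.erase j0, ((lam j - lb)^2 * ((lam j - lb) + τ))
        + (lam j0 - lb)^2 * ((lam j0 - lb) + τ)
      = ∑ j, (lam j - lb)^2 * ((lam j - lb) + τ) :=
    Finset.sum_erase_add _ _ (Finset.mem_univ j0)
  have hlin : ∑ j ∈ Finset.univ.erase j0, (lc * (lam j - lb) + dl)
      = lc * s + ((N:ℝ)-1) * dl := by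
    rw [Finset.sum_add_distrib, ← Finset.mul_sum, Finset.sum_const,
      Finset.card_erase_of_mem (Finset.mem_univ j0), Finset.card_univ, Fintype.card_fin,
      nsmul_eq_mul]
    have h1 : ∑ j ∈ Finset.univ.erase j0, (lam j - lb) = s := by
      have h2 : ∑ j ∈ Finset.univ.erase j0, (lam j - lb) + (lam j0 - lb)
          = ∑ j : Fin N, (lam j - lb) := Finset.sum_erase_add _ _ (Finset.mem_univ j0)
      have h3 : ∑ j : Fin N, (lam j - lb) = 0 := by
        rw [Finset.sum_sub_distrib, hsum, Finset.sum_const, Finset.card_univ,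
          Fintype.card_fin, nsmul_eq_mul]
        ring
      rw [h3] at h2; rw [hs]; linarith [h2]
    rw [h1]
    have h4 : ((N - 1 : ℕ) : ℝ) = (N:ℝ) - 1 := by
      rw [Nat.cast_sub hNpos]; norm_num
    rw [h4]
  have hbound : lc * s + ((N:ℝ)-1) * dl ≤ ∑ j ∈ Finset.univ.erase j0,
      ((lam j - lb)^2 * ((lam j - lb) + τ)) := by
    rw [← hlin]
    exact Finset.sum_le_sum (fun j _ => hpoint j)
  -- closed form of the lower bound
  have hfin : (lam j0 - lb)^2 * ((lam j0 - lb) + τ) + (lc * s + ((N:ℝ)-1) * dl)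
      = (N:ℝ)*((N:ℝ)-2)*a^2*(c - s) := by
    have hx0 : lam j0 - lb = -s := by rw [hs]; ring
    rw [hx0, hlc, hdl, hb, hτ, ha]
    field_simp
    ring
  have hfin0 : 0 ≤ (N:ℝ)*((N:ℝ)-2)*a^2*(c - s) := by
    apply mul_nonneg
    apply mul_nonneg
    apply mul_nonneg <;> try positivity
    · linarith
    · exact sq_nonneg a
    · linarith
  have h0 : 0 ≤ ∑ j, (lam j - lb)^2 * ((lam j - lb) + τ) := by
    rw [← hseraseadd]
    linarith [hbound, hfin, hfin0]
  positivity
end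

section
/- Let N ≥ 5 and t > 0, and for integers 1 ≤ k ≤ N and 0 ≤ l < k/2 define A = 1 - (N-2)/(3(N-1)), B = (N - Ak)/(k - 2l), a = (A - B)t, b = (A + B)t, and F_{k,l} = t³(−2kA³ − 3A²(N − Ak) + (N − Ak)³/(k − 2l)²). Then for 1 ≤ l < k/2, F_{k,0} < F_{k,l} whenever N ≠ Ak. -/
/-- Let `N ≥ 5`, `t > 0`, integers `1 ≤ k ≤ N`, `1 ≤ l < k/2`,
`A = 1 - (N-2)/(3(N-1))`, and
`F_{k,l} = t³(−2kA³ − 3A²(N − Ak) + (N − Ak)³/(k − 2l)²)`.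
Then `F_{k,0} < F_{k,l}` whenever `N ≠ Ak`. -/
theorem F_k_zero_lt (N k l : ℕ) (hN : 5 ≤ N) (t : ℝ) (ht : 0 < t)
    (hk1 : 1 ≤ k) (hkN : k ≤ N) (hl : 1 ≤ l) (hlk : 2 * l < k)
    (A : ℝ) (hA : A = 1 - ((N:ℝ)-2)/(3*((N:ℝ)-1)))
    (hNe : (N:ℝ) ≠ A * k) :
    t^3 * (-2*k*A^3 - 3*A^2*((N:ℝ) - A*k) + ((N:ℝ) - A*k)^3 / ((k:ℝ) - 2*0)^2)
      < t^3 * (-2*k*A^3 - 3*A^2*((N:ℝ) - A*k) + ((N:ℝ) - A*k)^3 / ((k:ℝ) - 2*l)^2) := by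
  have hN5 : (5:ℝ) ≤ (N:ℝ) := by exact_mod_cast hN
  have hkR : (1:ℝ) ≤ (k:ℝ) := by exact_mod_cast hk1
  have hkNR : (k:ℝ) ≤ (N:ℝ) := by exact_mod_cast hkN
  have hlkR : 2*(l:ℝ) < (k:ℝ) := by exact_mod_cast hlk
  have hlR : (1:ℝ) ≤ (l:ℝ) := by exact_mod_cast hl
  have hAlt : A < 1 := by
    rw [hA]
    have h1 : 0 < 3*((N:ℝ)-1) := by linarith
    have : 0 < ((N:ℝ)-2)/(3*((N:ℝ)-1)) := div_pos (by linarith) h1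
    linarith
  have hC : 0 < (N:ℝ) - A*k := by
    have : A*k < 1*k := by
      apply mul_lt_mul_of_pos_right hAlt (by linarith)
    rcases lt_or_eq_of_le (show A*k ≤ (N:ℝ) by nlinarith) with h | h
    · linarith
    · exact absurd h.symm hNe
  have hC3 : 0 < ((N:ℝ) - A*k)^3 := by positivity
  have hd : 0 < (k:ℝ) - 2*l := by linarith
  have key : ((N:ℝ) - A*k)^3 / ((k:ℝ) - 2*0)^2 < ((N:ℝ) - A*k)^3 / ((k:ℝ) - 2*l)^2 := by
    apply div_lt_div_of_pos_left hC3 (by positivity)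
    have : ((k:ℝ) - 2*l)^2 < (k:ℝ)^2 := by nlinarith
    simpa using this
  nlinarith [mul_lt_mul_of_pos_left key (pow_pos ht 3)]
end

section
/- Let n ≥ 4, N = (n-1)(n+2)/2, and f(λ) = [N(N-3)θ - (2N-9n+6)N]λ̄³ + [(2N-12n+6)-(N-3)θ]λ̄Σλⱼ² + 3nΣλⱼ³. Then for the configuration λᵐ (m entries −θλ̄, N−m entries ((N+mθ)/(N−m))λ̄), one has f(λᵐ)/λ̄³ = (mNt²/(N−m))·[3(N+1−n) − (N−3 + 3n(N−2m)/(N−m))·t], where t = 1+θ. -/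
lemma sum_ite_const (N m : ℕ) (hm : m ≤ N) (a b : ℝ) :
    ∑ j : Fin N, (if (j:ℕ) < m then a else b) = m * a + (N - m : ℕ) * b := by
  rw [Fin.sum_univ_eq_sum_range (fun x => if x < m then a else b), Finset.range_eq_Ico,
    ← Finset.sum_Ico_consecutive _ (Nat.zero_le m) hm]
  rw [Finset.sum_congr rfl (fun x hx => if_pos (Finset.mem_Ico.mp hx).2),
    Finset.sum_congr rfl (g := fun _ => b) (fun x hx => if_neg (by
      have := (Finset.mem_Ico.mp hx).1; omega)),
    Finset.sum_const, Finset.sum_const]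
  simp [Nat.card_Ico, mul_comm]

/-- For the configuration `λᵐ` (`m` entries `−θλ̄`, `N−m` entries
`((N+mθ)/(N−m))λ̄`), one has
`f(λᵐ)/λ̄³ = (mNt²/(N−m))·[3(N+1−n) − (N−3 + 3n(N−2m)/(N−m))·t]`, `t = 1+θ`. -/
theorem f_lam_m (n N m : ℕ) (hn : 4 ≤ n) (hN : N = (n-1)*(n+2)/2)
    (hm : m ≤ N - 1) (θ : ℝ) (lb : ℝ) (hlb : 0 < lb) :
    (((N:ℝ)*((N:ℝ)-3)*θ - (2*(N:ℝ)-9*n+6)*(N:ℝ)) * lb^3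
      + ((2*(N:ℝ)-12*n+6) - ((N:ℝ)-3)*θ) * lb *
          (∑ j : Fin N, ((if (j:ℕ) < m then -θ * lb else ((N:ℝ) + m*θ)/((N:ℝ) - m) * lb))^2)
      + 3*n * (∑ j : Fin N, ((if (j:ℕ) < m then -θ * lb else ((N:ℝ) + m*θ)/((N:ℝ) - m) * lb))^3))
      / lb^3
    = ((m:ℝ)*(N:ℝ)*(1+θ)^2/((N:ℝ)-m)) *
        (3*((N:ℝ)+1-n) - ((N:ℝ)-3 + 3*n*((N:ℝ)-2*m)/((N:ℝ)-m)) * (1+θ)) := by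
  have hmN : m < N := by
    have : 9 ≤ N := by
      subst hN
      have hk : 3 * 6 ≤ (n - 1) * (n + 2) :=
        Nat.mul_le_mul (show 3 ≤ n - 1 by omega) (show 6 ≤ n + 2 by omega)
      calc 9 = 3 * 6 / 2 := rfl
        _ ≤ (n - 1) * (n + 2) / 2 := Nat.div_le_div_right hk
    omega
  have h2 : (∑ j : Fin N, ((if (j:ℕ) < m then -θ * lb else ((N:ℝ) + m*θ)/((N:ℝ) - m) * lb))^2)
      = m * (-θ * lb)^2 + (N - m : ℕ) * (((N:ℝ) + m*θ)/((N:ℝ) - m) * lb)^2 := by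
    rw [← sum_ite_const N m hmN.le]
    exact Finset.sum_congr rfl fun j _ => by split <;> rfl
  have h3 : (∑ j : Fin N, ((if (j:ℕ) < m then -θ * lb else ((N:ℝ) + m*θ)/((N:ℝ) - m) * lb))^3)
      = m * (-θ * lb)^3 + (N - m : ℕ) * (((N:ℝ) + m*θ)/((N:ℝ) - m) * lb)^3 := by
    rw [← sum_ite_const N m hmN.le]
    exact Finset.sum_congr rfl fun j _ => by split <;> rfl
  rw [h2, h3]
  have hcast : ((N - m : ℕ) : ℝ) = (N:ℝ) - m := by
    push_cast [hmN.le]; ring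
  rw [hcast]
  have hNm : (N:ℝ) - m ≠ 0 := by
    have : (m:ℝ) < N := by exact_mod_cast hmN
    linarith
  have hlb' : lb ≠ 0 := hlb.ne'
  field_simp
  ring
end

section
/- Let n ≥ 4, N = (n-1)(n+2)/2, and set t = 3(N+1−n)/(N−3+3n(N−2)/(N−1)). Then with g(m) = (mNt²/(N−m))·[3(N+1−n) − (N−3 + 3n(N−2m)/(N−m))·t] for 0 ≤ m ≤ N−1, one has g(0) = g(1) = 0 and g(m) > 0 for all 2 ≤ m ≤ N−1. -/
/-- With `t = 3(N+1−n)/(N−3+3n(N−2)/(N−1))` and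
`g(m) = (mNt²/(N−m))·[3(N+1−n) − (N−3 + 3n(N−2m)/(N−m))·t]`,
one has `g(0) = g(1) = 0` and `g(m) > 0` for `2 ≤ m ≤ N−1`. -/
theorem g_values (n N : ℕ) (hn : 4 ≤ n) (hN : N = (n-1)*(n+2)/2)
    (t : ℝ) (ht : t = 3*((N:ℝ)+1-n) / ((N:ℝ)-3 + 3*n*((N:ℝ)-2)/((N:ℝ)-1))) :
    (0:ℝ)*(N:ℝ)*t^2/((N:ℝ)-0) *
        (3*((N:ℝ)+1-n) - ((N:ℝ)-3 + 3*n*((N:ℝ)-2*0)/((N:ℝ)-0)) * t) = 0 ∧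
    (1:ℝ)*(N:ℝ)*t^2/((N:ℝ)-1) *
        (3*((N:ℝ)+1-n) - ((N:ℝ)-3 + 3*n*((N:ℝ)-2*1)/((N:ℝ)-1)) * t) = 0 ∧
    ∀ m : ℕ, 2 ≤ m → m ≤ N - 1 →
      0 < (m:ℝ)*(N:ℝ)*t^2/((N:ℝ)-m) *
        (3*((N:ℝ)+1-n) - ((N:ℝ)-3 + 3*n*((N:ℝ)-2*m)/((N:ℝ)-m)) * t) := by
  -- 2*N = (n-1)*(n+2) in ℕ
  have hdvd : 2 ∣ (n-1)*(n+2) := by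
    rcases Nat.even_or_odd n with ⟨k, hk⟩ | ⟨k, hk⟩
    · exact Dvd.dvd.mul_left ⟨k+1, by omega⟩ _
    · exact Dvd.dvd.mul_right ⟨k, by omega⟩ _
  have hN2 : 2 * N = (n-1)*(n+2) := by
    rw [hN, Nat.mul_div_cancel' hdvd]
  have hN9 : 9 ≤ N := by
    have h18 : 18 ≤ (n-1)*(n+2) := Nat.mul_le_mul (show 3 ≤ n-1 by omega) (show 6 ≤ n+2 by omega)
    omega
  have hnN : n + 1 ≤ N := by
    have h3 : 3*(n+2) ≤ (n-1)*(n+2) := Nat.mul_le_mul_right (n+2) (by omega)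
    omega
  have hn4 : (4:ℝ) ≤ (n:ℝ) := by exact_mod_cast hn
  have hN9r : (9:ℝ) ≤ (N:ℝ) := by exact_mod_cast hN9
  have hnNr : (n:ℝ) + 1 ≤ (N:ℝ) := by exact_mod_cast hnN
  set A : ℝ := 3*((N:ℝ)+1-(n:ℝ)) with hA
  set D : ℝ := (N:ℝ)-3 + 3*(n:ℝ)*((N:ℝ)-2)/((N:ℝ)-1) with hD
  have hn0 : (0:ℝ) ≤ (n:ℝ) := Nat.cast_nonneg n
  have hApos : 0 < A := by rw [hA]; linarith
  have hDpos : 0 < D := by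
    have h1 : 0 < 3*(n:ℝ)*((N:ℝ)-2)/((N:ℝ)-1) :=
      div_pos (by nlinarith) (by linarith)
    rw [hD]; linarith
  have htpos : 0 < t := by rw [ht]; exact div_pos hApos hDpos
  have hDt : D * t = A := by
    rw [ht, mul_comm, div_mul_cancel₀ _ hDpos.ne']
  refine ⟨by norm_num, ?_, ?_⟩
  · have h2 : ((N:ℝ)-2*1) = (N:ℝ)-2 := by ring
    rw [h2]
    rw [show (3*((N:ℝ)+1-(n:ℝ)) - ((N:ℝ)-3 + 3*(n:ℝ)*((N:ℝ)-2)/((N:ℝ)-1)) * t) = A - D*t from rfl, hDt]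
    ring
  · intro m hm2 hm1
    have hmN : (m:ℝ) + 1 ≤ (N:ℝ) := by exact_mod_cast (by omega : m + 1 ≤ N)
    have hm2r : (2:ℝ) ≤ (m:ℝ) := by exact_mod_cast hm2
    set Dm : ℝ := (N:ℝ)-3 + 3*(n:ℝ)*((N:ℝ)-2*(m:ℝ))/((N:ℝ)-(m:ℝ)) with hDm
    have key : ((N:ℝ)-2*(m:ℝ))/((N:ℝ)-(m:ℝ)) < ((N:ℝ)-2)/((N:ℝ)-1) := by
      rw [div_lt_div_iff₀ (by linarith) (by linarith)]
      nlinarith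
    have hDmD : Dm < D := by
      have h := mul_lt_mul_of_pos_left key (by linarith : (0:ℝ) < 3*(n:ℝ))
      rw [← mul_div_assoc, ← mul_div_assoc] at h
      rw [hDm, hD]
      linarith
    have hbr : 0 < A - Dm * t := by
      have := mul_lt_mul_of_pos_right hDmD htpos
      rw [hDt] at this
      linarith
    have hpre : 0 < (m:ℝ)*(N:ℝ)*t^2/((N:ℝ)-(m:ℝ)) := by
      apply div_pos
      · exact mul_pos (mul_pos (by linarith) (by linarith)) (pow_pos htpos 2)
      · linarith
    exact mul_pos hpre hbr
end

section
/- Let N ≥ 2 and t > 0, let c = 3 − (N−2)/(N−1), and suppose k satisfies 1 − (N−2)/(3(N−1)) = N/k. Then for all a, b ≥ 0 with a + b = 2Nt/k, the value F(0,...,0,a,...,a,b,...,b) (with N−k zeros, k/2 copies of a, k/2 copies of b) of F(x) = −c·t·Σxⱼ² + Σxⱼ³ is independent of the choice of a and b, i.e., equals F at a = 0, b = 2Nt/k. -/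
lemma sum_split_pow (N m p q : ℕ) (h : N = m + p + p) (hq : q ≠ 0) (u v : ℝ) :
    ∑ j : Fin N, (if (j:ℕ) < m then (0:ℝ) else if (j:ℕ) < m + p then u else v)^q
      = p*u^q + p*v^q := by
  rw [Fin.sum_univ_eq_sum_range (fun n => (if n < m then (0:ℝ) else if n < m + p then u else v)^q), Finset.range_eq_Ico,
    ← Finset.sum_Ico_consecutive _ (Nat.zero_le m) (by omega : m ≤ N),
    ← Finset.sum_Ico_consecutive _ (by omega : m ≤ m + p) (by omega : m + p ≤ N)]
  have h1 : ∑ j ∈ Finset.Ico 0 m, (if j < m then (0:ℝ) else if j < m + p then u else v)^q = 0 := by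
    apply Finset.sum_eq_zero
    intro j hj
    rw [Finset.mem_Ico] at hj
    rw [if_pos hj.2, zero_pow hq]
  have h2 : ∑ j ∈ Finset.Ico m (m+p), (if j < m then (0:ℝ) else if j < m + p then u else v)^q = p * u^q := by
    have hc2 : m + p - m = p := by omega
    rw [Finset.sum_congr rfl (fun j hj => ?_), Finset.sum_const, nsmul_eq_mul, Nat.card_Ico, hc2]
    rw [Finset.mem_Ico] at hj
    rw [if_neg (by omega), if_pos hj.2]
  have h3 : ∑ j ∈ Finset.Ico (m+p) N, (if j < m then (0:ℝ) else if j < m + p then u else v)^q = p * v^q := by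
    have hc3 : N - (m + p) = p := by omega
    rw [Finset.sum_congr rfl (fun j hj => ?_), Finset.sum_const, nsmul_eq_mul, Nat.card_Ico, hc3]
    rw [Finset.mem_Ico] at hj
    rw [if_neg (by omega), if_neg (by omega)]
  rw [h1, h2, h3, zero_add]

/-- Suppose `k` is an even integer, `1 ≤ k ≤ N`, with `1 − (N−2)/(3(N−1)) = N/k`.
Then for all `a, b ≥ 0` with `a + b = 2Nt/k`, the value of
`F(x) = −(3 − (N−2)/(N−1))·t·Σxⱼ² + Σxⱼ³` at the configuration with `N−k` zeros,
`k/2` copies of `a` and `k/2` copies of `b` is independent of `a, b`; it equals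
the value at `a = 0`, `b = 2Nt/k`. -/
theorem F_indep_of_split (N k p : ℕ) (hN : 2 ≤ N) (hk1 : 1 ≤ k) (hkN : k ≤ N)
    (hkp : k = 2 * p) (t : ℝ) (ht : 0 < t)
    (hAk : 1 - ((N:ℝ)-2)/(3*((N:ℝ)-1)) = (N:ℝ)/(k:ℝ))
    (a b : ℝ) (ha : 0 ≤ a) (hb : 0 ≤ b) (hab : a + b = 2*(N:ℝ)*t/(k:ℝ)) :
    (-(3 - ((N:ℝ)-2)/((N:ℝ)-1)) * t *
        (∑ j : Fin N, (if (j:ℕ) < N - k then (0:ℝ) else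
          if (j:ℕ) < N - k + p then a else b)^2)
      + ∑ j : Fin N, (if (j:ℕ) < N - k then (0:ℝ) else
          if (j:ℕ) < N - k + p then a else b)^3)
    = (-(3 - ((N:ℝ)-2)/((N:ℝ)-1)) * t *
        (∑ j : Fin N, (if (j:ℕ) < N - k then (0:ℝ) else
          if (j:ℕ) < N - k + p then (0:ℝ) else 2*(N:ℝ)*t/(k:ℝ))^2)
      + ∑ j : Fin N, (if (j:ℕ) < N - k then (0:ℝ) else
          if (j:ℕ) < N - k + p then (0:ℝ) else 2*(N:ℝ)*t/(k:ℝ))^3) := by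
  have hm : N = (N - k) + p + p := by omega
  rw [sum_split_pow N (N-k) p 2 hm (by norm_num) a b,
      sum_split_pow N (N-k) p 3 hm (by norm_num) a b,
      sum_split_pow N (N-k) p 2 hm (by norm_num) 0 _,
      sum_split_pow N (N-k) p 3 hm (by norm_num) 0 _]
  have h1 : ((N:ℝ) - 1) ≠ 0 := by
    have : (2:ℝ) ≤ (N:ℝ) := by exact_mod_cast hN
    linarith
  have hc : 3 - ((N:ℝ)-2)/((N:ℝ)-1) = 3*((N:ℝ)/(k:ℝ)) := by
    field_simp at hAk ⊢
    linarith
  rw [hc, ← hab]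
  ring_nf
  linear_combination (-3*(p:ℝ)*a*b) * hab
end
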